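/- Let t ≥ 2 and k ≥ 2 be integers, let m be an even integer with m ≥ 4(t+k)+2, let n be an integer with (t−1)(m−1) ≤ n−1 < t(m−1), and set p = ⌊(n−1)/t⌋. If p = m−σ for some integer σ with 2 ≤ σ ≤ k, then R(C_m, B_n^{(k)}) ≥ n + kp + σ − 1; that is, there is a graph on n + kp + σ − 2 vertices containing no cycle of length m whose complement contains no B_n^{(k)}. -/

import Mathlib

/-!
The bound comes from one explicit graph: a core clique on `m - 1` vertices with pendant cliques
glued at distinct core vertices, plus some disjoint copies of `K_{m-1}`. Every cycle stays inside
one of these cliques, because a pendant clique is attached through a single cut vertex, so there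
is no `C_m`. A book `B_n^{(k)}` in the complement is an independent `k`-set `S` together with `n`
vertices outside the closed neighbourhoods of `S`. These neighbourhoods contain disjoint cliques:
the core and `k - 1` further cliques on at least `p` vertices if `S` meets the core (a pendant
clique then loses its core vertex), and otherwise `k` cliques on at least `p + 1` vertices.
Either way they cover at least `kp + σ - 1` vertices, and with `n - 1 = tp + r` the pendant sizes can be chosen so
that the graph has exactly `n + kp + σ - 2` vertices, leaving fewer than `n` for the book.
-/

/-- `G` contains a cycle of length `m`. -/
def HasCycleLen {V : Type*} (G : SimpleGraph V) (m : ℕ) : Prop :=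
  ∃ (v : V) (c : G.Walk v v), c.IsCycle ∧ c.length = m

/-- `G` contains the book `B_n^{(k)}`: a clique on `k` vertices together with
`n` further vertices each adjacent to all of them. -/
def HasBook {V : Type*} (G : SimpleGraph V) (k n : ℕ) : Prop :=
  ∃ S T : Finset V, S.card = k ∧ T.card = n ∧ Disjoint S T ∧
    (∀ u ∈ S, ∀ v ∈ S, u ≠ v → G.Adj u v) ∧
    (∀ u ∈ S, ∀ v ∈ T, G.Adj u v)

/-- Every simple graph on `N` vertices contains `C_m` or its complement contains
`B_n^{(k)}`. The Ramsey number `R(C_m, B_n^{(k)})` is the least such `N`. -/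
def RamseyProp (m k n N : ℕ) : Prop :=
  ∀ G : SimpleGraph (Fin N), HasCycleLen G m ∨ HasBook Gᶜ k n

open Finset

theorem Finset.card_mul_add_le_sum {ι : Type*} {S : Finset ι} {f : ι → ℕ} {a b : ℕ} {c : ι}
    (hc : c ∈ S) (hf : ∀ i ∈ S, a ≤ f i) (hfc : a + b ≤ f c) : #S * a + b ≤ ∑ i ∈ S, f i := by
  classical
  rw [← sum_erase_add S f hc, ← card_erase_add_one hc, add_mul, one_mul, add_assoc]
  gcongr
  simpa using card_nsmul_le_sum (S.erase c) f a fun i hi => hf i (mem_of_mem_erase hi)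

theorem Fin.sum_ite_val_lt {M a : ℕ} (haM : a ≤ M) (c : ℕ) :
    ∑ x : Fin M, (if (x : ℕ) < a then c else 0) = a * c := by
  rw [Fin.sum_univ_eq_sum_range (fun i => if i < a then c else 0), ← sum_range_add_sum_Ico _ haM,
    sum_congr rfl fun i hi => if_pos (mem_range.1 hi),
    sum_congr rfl fun i hi => if_neg (not_lt.2 (mem_Ico.1 hi).1)]
  simp

namespace SimpleGraph

variable {V : Type*} {G : SimpleGraph V}

theorem Walk.support_subset_of_adj_mem_or_eq {A : Set V} {h : V}
    (hA : ∀ ⦃x y⦄, x ∈ A → G.Adj x y → y ∈ A ∨ y = h) {a b : V} (w : G.Walk a b)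
    (ha : a ∈ A) (hw : h ∉ w.support) : ∀ z ∈ w.support, z ∈ A := by
  induction w with
  | nil => simpa using ha
  | cons hadj w ih =>
    simp only [support_cons, List.mem_cons, not_or, forall_eq_or_imp] at hw ⊢
    exact ⟨ha, ih ((hA ha hadj).resolve_right fun e => hw.2 (e ▸ w.start_mem_support)) hw.2⟩

theorem Walk.IsCycle.support_subset_of_adj_mem_or_eq {A : Set V} {h : V}
    (hA : ∀ ⦃x y⦄, x ∈ A → G.Adj x y → y ∈ A ∨ y = h) {u a : V} {c : G.Walk u u}
    (hc : c.IsCycle) (ha : a ∈ c.support) (haA : a ∈ A) : ∀ z ∈ c.support, z ∈ A ∨ z = h := by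
  classical
  by_cases hh : h ∈ c.support
  · -- Started at `h`, the cycle is an edge `h u₁` followed by a path `w` from `u₁` back to `h`;
    -- the initial segments of `w` avoid `h`, so they cannot leave `A` once they are in it.
    have hmem := fun z => c.mem_support_rotate_iff (w := z) h hh
    have hrot := hc.rotate hh
    generalize c.rotate h hh = d at hmem hrot
    cases d with
    | nil => exact absurd hrot (by simp)
    | @cons _ u₁ _ hadj w =>
      rw [Walk.cons_isCycle_iff] at hrot
      have hw : ∀ z ∈ w.support, z ≠ h → u₁ ∈ A → z ∈ A := fun z hz hzh hu₁ =>
        w.takeUntil z hz |>.support_subset_of_adj_mem_or_eq hA hu₁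
          (endpoint_notMem_support_takeUntil hrot.1 hz hzh.symm) z (Walk.end_mem_support _)
      have hu₁ : u₁ ∈ A := by
        by_cases hah : a = h
        · subst hah
          exact (hA haA hadj).resolve_right hadj.ne.symm
        · have haw : a ∈ w.support := by
            simpa [hah] using (hmem a).2 ha
          exact (w.takeUntil a haw).reverse.support_subset_of_adj_mem_or_eq hA haA
            (by simpa using endpoint_notMem_support_takeUntil hrot.1 haw (Ne.symm hah)) u₁
            (by simp)
      intro z hz
      by_cases hzh : z = h
      · exact Or.inr hzh
      · exact Or.inl (hw z (by simpa [hzh] using (hmem z).2 hz) hzh hu₁)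
  · intro z hz
    exact Or.inl <| (c.rotate a ha).support_subset_of_adj_mem_or_eq hA haA
      (by rwa [Walk.mem_support_rotate_iff]) z (by rwa [Walk.mem_support_rotate_iff])

theorem Walk.IsCycle.length_le_card {u : V} {c : G.Walk u u} (hc : c.IsCycle) {B : Finset V}
    (hB : ∀ z ∈ c.support, z ∈ B) : c.length ≤ #B := by
  classical
  have hlen : c.support.tail.length = c.length := by simp [Walk.length_support]
  rw [← hlen, ← List.toFinset_card_of_nodup hc.support_nodup]
  exact card_le_card fun z hz => hB z (List.mem_of_mem_tail (List.mem_toFinset.1 hz))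

theorem exists_isIndepSet_of_hasBook_compl [Fintype V] [DecidableEq V] [DecidableRel G.Adj]
    {k n : ℕ} (h : HasBook Gᶜ k n) :
    ∃ S : Finset V, #S = k ∧ G.IsIndepSet S ∧
      n + #(S.biUnion fun v => insert v (G.neighborFinset v)) ≤ Fintype.card V := by
  obtain ⟨S, T, hS, hT, -, hSS, hST⟩ := h
  refine ⟨S, hS, fun u hu v hv huv => ((compl_adj G u v).1 (hSS u hu v hv huv)).2, ?_⟩
  have hdisj : Disjoint T (S.biUnion fun v => insert v (G.neighborFinset v)) := by
    rw [Finset.disjoint_left]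
    intro z hzT hz
    simp only [mem_biUnion, mem_insert, mem_neighborFinset] at hz
    obtain ⟨v, hv, hzv⟩ := hz
    obtain ⟨hne, hnadj⟩ := (compl_adj G v z).1 (hST v hv z hzT)
    exact hzv.elim (fun h => hne h.symm) hnadj
  rw [← hT, ← card_union_of_disjoint hdisj]
  exact card_le_univ _

/-- An independent set meets each fibre of `f` at most once, so the fibres through its vertices
are disjoint subsets of their closed neighbourhoods. -/
theorem sum_card_fiber_le_card_biUnion [Fintype V] [DecidableEq V] [DecidableRel G.Adj]
    {β : Type*} [DecidableEq β] (f : V → β) (hf : ∀ u v, u ≠ v → f u = f v → G.Adj u v)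
    {S : Finset V} (hS : G.IsIndepSet S) :
    ∑ v ∈ S, #{w | f w = f v} ≤ #(S.biUnion fun v => insert v (G.neighborFinset v)) := by
  rw [← card_biUnion]
  · refine card_le_card (biUnion_mono fun v _ w hw => ?_)
    rw [mem_filter] at hw
    rw [mem_insert, mem_neighborFinset, or_iff_not_imp_left]
    exact fun hwv => hf v w (Ne.symm hwv) hw.2.symm
  · intro u hu v hv huv
    rw [Function.onFun, Finset.disjoint_left]
    intro w hwu hwv
    rw [mem_filter] at hwu hwv
    exact hS hu hv huv (hf u v huv (hwu.2.symm.trans hwv.2))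

end SimpleGraph

open SimpleGraph

theorem HasCycleLen.map {V W : Type*} {G : SimpleGraph V} {H : SimpleGraph W} {m : ℕ}
    (f : G ↪g H) (h : HasCycleLen G m) : HasCycleLen H m := by
  obtain ⟨v, c, hc, hlen⟩ := h
  exact ⟨f v, c.map f.toHom, hc.map f.injective, by rw [Walk.length_map, hlen]⟩

theorem HasBook.compl_map {V W : Type*} {G : SimpleGraph V} {H : SimpleGraph W} {k n : ℕ}
    (f : G ↪g H) (h : HasBook Gᶜ k n) : HasBook Hᶜ k n := by
  classical
  have hadj : ∀ u v, Gᶜ.Adj u v → Hᶜ.Adj (f u) (f v) := fun u v huv => by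
    rw [compl_adj] at huv ⊢
    exact ⟨f.injective.ne huv.1, by rw [f.map_adj_iff]; exact huv.2⟩
  obtain ⟨S, T, hS, hT, hST, hSS, hST'⟩ := h
  refine ⟨S.map f.toEmbedding, T.map f.toEmbedding, by simpa, by simpa,
    disjoint_map _ |>.2 hST, ?_, ?_⟩ <;> simp only [mem_map]
  · rintro _ ⟨u, hu, rfl⟩ _ ⟨v, hv, rfl⟩ huv
    exact hadj u v (hSS u hu v hv fun h => huv (h ▸ rfl))
  · rintro _ ⟨u, hu, rfl⟩ _ ⟨v, hv, rfl⟩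
    exact hadj u v (hST' u hu v hv)

namespace PendantCliques

variable {R M : ℕ} {e : Fin M → ℕ}

variable (R M e) in
/-- `inl (j, y)`: the `j`-th of `R` disjoint copies of `K_M`; `inr (inl x)`: the core `K_M`;
`inr (inr ⟨x, _⟩)`: the `e x` further vertices of the pendant clique glued at core vertex `x`. -/
abbrev Vert := (Fin R × Fin M) ⊕ (Fin M ⊕ Σ x : Fin M, Fin (e x))

def piece : Vert R M e → Fin R ⊕ Option (Fin M)
  | .inl (j, _) => .inl j
  | .inr (.inl _) => .inr none
  | .inr (.inr ⟨x, _⟩) => .inr (some x)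

def branch : Vert R M e → Fin R ⊕ Fin M
  | .inl (j, _) => .inl j
  | .inr (.inl x) => .inr x
  | .inr (.inr ⟨x, _⟩) => .inr x

variable (R M e) in
/-- Both `piece` and `branch` partition the vertices into cliques: `piece` separates the core
from the pendant vertices, `branch` puts core vertex `x` together with its pendant clique. -/
def graph : SimpleGraph (Vert R M e) where
  Adj u v := u ≠ v ∧ (piece u = piece v ∨ branch u = branch v)
  symm := ⟨fun _ _ h => ⟨h.1.symm, h.2.imp Eq.symm Eq.symm⟩⟩
  loopless := ⟨fun _ h => h.1 rfl⟩

instance : DecidableRel (graph R M e).Adj := fun _ _ => inferInstanceAs (Decidable (_ ∧ _))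

theorem card_piece_inl (j : Fin R) : #{w : Vert R M e | piece w = .inl j} = M := by
  rw [card_filter, Fintype.sum_sum_type, Fintype.sum_sum_type, Fintype.sum_prod_type,
    Fintype.sum_sigma]
  simp [piece]

theorem card_piece_none : #{w : Vert R M e | piece w = .inr none} = M := by
  rw [card_filter, Fintype.sum_sum_type, Fintype.sum_sum_type, Fintype.sum_prod_type,
    Fintype.sum_sigma]
  simp [piece]

theorem card_piece_some (x : Fin M) : #{w : Vert R M e | piece w = .inr (some x)} = e x := by
  rw [card_filter, Fintype.sum_sum_type, Fintype.sum_sum_type, Fintype.sum_prod_type,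
    Fintype.sum_sigma]
  simp [piece]

theorem card_branch_inl (j : Fin R) : #{w : Vert R M e | branch w = .inl j} = M := by
  rw [card_filter, Fintype.sum_sum_type, Fintype.sum_sum_type, Fintype.sum_prod_type,
    Fintype.sum_sigma]
  simp [branch]

theorem card_branch_inr (x : Fin M) : #{w : Vert R M e | branch w = .inr x} = e x + 1 := by
  rw [card_filter, Fintype.sum_sum_type, Fintype.sum_sum_type, Fintype.sum_prod_type,
    Fintype.sum_sigma]
  simp [branch, add_comm]

theorem card_vert : Fintype.card (Vert R M e) = R * M + (M + ∑ x, e x) := by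
  simp

theorem piece_eq_of_adj {j : Fin R} {w w' : Vert R M e} (hw : piece w = .inl j)
    (h : (graph R M e).Adj w w') : piece w' = .inl j := by
  obtain ⟨-, h⟩ := h
  rcases w with ⟨j₁, y₁⟩ | x₁ | ⟨x₁, a₁⟩ <;> rcases w' with ⟨j₂, y₂⟩ | x₂ | ⟨x₂, a₂⟩ <;>
    simp_all [piece, branch]

theorem piece_eq_or_eq_of_adj {x : Fin M} {w w' : Vert R M e} (hw : piece w = .inr (some x))
    (h : (graph R M e).Adj w w') : piece w' = .inr (some x) ∨ w' = .inr (.inl x) := by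
  obtain ⟨-, h⟩ := h
  rcases w with ⟨j₁, y₁⟩ | x₁ | ⟨x₁, a₁⟩ <;> rcases w' with ⟨j₂, y₂⟩ | x₂ | ⟨x₂, a₂⟩ <;>
    simp_all [piece, branch]

theorem branch_eq_of_isCycle {u v : Vert R M e} {c : (graph R M e).Walk u u} (hc : c.IsCycle)
    (hv : v ∈ c.support) (hvcore : piece v ≠ .inr none) :
    ∀ z ∈ c.support, branch z = branch v := by
  intro z hz
  rcases v with ⟨j, y⟩ | x | ⟨x, a⟩
  · obtain hz | rfl := hc.support_subset_of_adj_mem_or_eq (A := {w | piece w = .inl j})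
      (h := .inl (j, y)) (fun _ _ hw h => .inl (piece_eq_of_adj hw h)) hv rfl z hz
    · rcases z with ⟨j₁, y₁⟩ | x₁ | ⟨x₁, a₁⟩ <;> simp_all [piece, branch]
    · rfl
  · exact absurd rfl hvcore
  · obtain hz | rfl := hc.support_subset_of_adj_mem_or_eq (A := {w | piece w = .inr (some x)})
      (h := .inr (.inl x)) (fun _ _ hw h => piece_eq_or_eq_of_adj hw h) hv rfl z hz
    · rcases z with ⟨j₁, y₁⟩ | x₁ | ⟨x₁, a₁⟩ <;> simp_all [piece, branch]
    · rfl

theorem length_le_of_isCycle (he : ∀ x, e x < M) {u : Vert R M e} {c : (graph R M e).Walk u u}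
    (hc : c.IsCycle) : c.length ≤ M := by
  by_cases hcore : ∀ z ∈ c.support, piece z = .inr none
  · calc c.length ≤ #{w : Vert R M e | piece w = .inr none} :=
          hc.length_le_card fun z hz => by simpa using hcore z hz
      _ = M := card_piece_none
  push Not at hcore
  obtain ⟨v, hv, hvcore⟩ := hcore
  calc c.length ≤ #{w | branch w = branch v} :=
        hc.length_le_card fun z hz => by simpa using branch_eq_of_isCycle hc hv hvcore z hz
    _ ≤ M := by
      rcases v with ⟨j, y⟩ | x | ⟨x, a⟩
      · exact (card_branch_inl j).le
      · exact absurd rfl hvcore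
      · exact (card_branch_inr x).trans_le (he x)

theorem le_card_piece_fiber {p : ℕ} (hpM : p ≤ M) (hep : ∀ x, e x = 0 ∨ p ≤ e x)
    (v : Vert R M e) : p ≤ #{w : Vert R M e | piece w = piece v} := by
  rcases v with ⟨j, y⟩ | x | ⟨x, a⟩
  · exact hpM.trans (card_piece_inl j).ge
  · exact hpM.trans card_piece_none.ge
  · exact ((hep x).resolve_left (Fin.pos a).ne').trans (card_piece_some x).ge

theorem lt_card_branch_fiber {p : ℕ} (hpM : p < M) (hep : ∀ x, e x = 0 ∨ p ≤ e x)
    {v : Vert R M e} (hv : piece v ≠ .inr none) : p < #{w : Vert R M e | branch w = branch v} := by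
  rcases v with ⟨j, y⟩ | x | ⟨x, a⟩
  · exact hpM.trans_le (card_branch_inl j).ge
  · exact absurd rfl hv
  · exact (Nat.lt_succ_of_le ((hep x).resolve_left (Fin.pos a).ne')).trans_le
      (card_branch_inr x).ge

theorem le_card_biUnion_closedNbhd {p s k : ℕ} (hM : M = p + s) (hs : 1 ≤ s) (hsk : s ≤ k)
    (hep : ∀ x, e x = 0 ∨ p ≤ e x) {S : Finset (Vert R M e)} (hSk : #S = k)
    (hS : (graph R M e).IsIndepSet S) :
    k * p + s ≤ #(S.biUnion fun v => insert v ((graph R M e).neighborFinset v)) := by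
  subst hSk
  by_cases hcore : ∃ c ∈ S, piece c = .inr none
  · obtain ⟨c, hc, hcnone⟩ := hcore
    refine le_trans ?_ <| sum_card_fiber_le_card_biUnion (G := graph R M e) piece
      (fun _ _ h h' => ⟨h, .inl h'⟩) hS
    refine card_mul_add_le_sum hc (fun v _ => le_card_piece_fiber (by omega) hep v) ?_
    rw [hcnone, card_piece_none, hM]
  · push Not at hcore
    refine le_trans ?_ <| sum_card_fiber_le_card_biUnion (G := graph R M e) branch
      (fun _ _ h h' => ⟨h, .inr h'⟩) hS
    calc #S * p + s ≤ #S • (p + 1) := by rw [smul_eq_mul, Nat.mul_succ]; omega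
      _ ≤ _ := card_nsmul_le_sum _ _ _ fun v hv => lt_card_branch_fiber (by omega) hep (hcore v hv)

theorem not_hasCycleLen (he : ∀ x, e x < M) {m : ℕ} (hMm : M < m) :
    ¬ HasCycleLen (graph R M e) m := by
  rintro ⟨_, c, hc, rfl⟩
  exact (length_le_of_isCycle he hc).not_gt hMm

theorem not_hasBook_compl {p s k n : ℕ} (hM : M = p + s) (hs : 1 ≤ s) (hsk : s ≤ k)
    (hep : ∀ x, e x = 0 ∨ p ≤ e x) (hcard : Fintype.card (Vert R M e) < n + (k * p + s)) :
    ¬ HasBook (graph R M e)ᶜ k n := by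
  intro h
  obtain ⟨S, hSk, hS, hn⟩ := exists_isIndepSet_of_hasBook_compl h
  have := le_card_biUnion_closedNbhd hM hs hsk hep hSk hS
  omega

end PendantCliques

open PendantCliques in
/-- The witness is `R` copies of `K_{p+s}` and a core `K_{p+s}` carrying `L` pendant cliques,
`a` of them on `p + 2` vertices and the others on `p + 1`. -/
theorem exists_ramsey_witness_of_params {m k n p s R L a N : ℕ} (hs : 1 ≤ s) (hsk : s ≤ k)
    (haL : a ≤ L) (hL : L ≤ p + s) (ha : a = 0 ∨ 2 ≤ s) (hm : p + s < m)
    (hN : R * (p + s) + (p + s) + L * p + a = N) (hNn : N < n + (k * p + s)) :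
    ∃ G : SimpleGraph (Fin N), ¬ HasCycleLen G m ∧ ¬ HasBook Gᶜ k n := by
  set e : Fin (p + s) → ℕ :=
    fun x => (if (x : ℕ) < L then p else 0) + (if (x : ℕ) < a then 1 else 0)
  have hcard : Fintype.card (Vert R (p + s) e) = N := by
    rw [card_vert, sum_add_distrib, Fin.sum_ite_val_lt hL, Fin.sum_ite_val_lt (haL.trans hL)]
    omega
  have he : ∀ x, e x < p + s := fun x => by simp only [e]; split_ifs <;> omega
  have hep : ∀ x, e x = 0 ∨ p ≤ e x := fun x => by simp only [e]; split_ifs <;> omega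
  let φ := ((graph R (p + s) e).overFinIso hcard).symm.toEmbedding
  exact ⟨_, fun h => not_hasCycleLen he hm (h.map φ),
    fun h => not_hasBook_compl rfl hs hsk hep (hcard ▸ hNn) (h.compl_map φ)⟩

/-- With `n - 1 = tp + r`: for `σ = 2` take `r` copies of `K_{p+1}` and `t + k - 1 - r` pendant
cliques on `p + 1` vertices; for `σ ≥ 3` take no copies and `t + k - 1` pendant cliques, `r` of
them on `p + 2` vertices. -/
theorem exists_ramsey_witness {t k m n p σ : ℕ} (hm : t + k < m) (hp : p = (n - 1) / t)
    (hσ1 : 2 ≤ σ) (hσ2 : σ ≤ k) (hpσ : p = m - σ) :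
    ∃ G : SimpleGraph (Fin (n + k * p + σ - 2)), ¬ HasCycleLen G m ∧ ¬ HasBook Gᶜ k n := by
  have ht : 0 < t := Nat.pos_of_ne_zero fun h => by simp [h] at hp; omega
  obtain ⟨r, hr, hdiv⟩ : ∃ r < t, t * p + r = n - 1 :=
    ⟨(n - 1) % t, Nat.mod_lt _ ht, hp ▸ Nat.div_add_mod _ _⟩
  have htp : p ≤ t * p := Nat.le_mul_of_pos_left p ht
  obtain ⟨L, hL⟩ : ∃ L, L + 1 = t + k := ⟨t + k - 1, by omega⟩
  have hkp : (t + k) * p = t * p + k * p := add_mul _ _ _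
  rcases hσ1.eq_or_lt with rfl | hσ3
  · obtain ⟨L', hL'⟩ : ∃ L', L' + r = L := ⟨L - r, by omega⟩
    have : (t + k) * p = L' * p + p + r * p := by rw [← hL, ← hL']; ring
    refine exists_ramsey_witness_of_params (p := p) (s := 1) (R := r) (L := L') (a := 0) le_rfl
      (by omega) (by omega) (by omega) (.inl rfl) (by omega) ?_ (by omega)
    rw [Nat.mul_succ]
    omega
  · have : (t + k) * p = L * p + p := by rw [← hL]; ring
    refine exists_ramsey_witness_of_params (p := p) (s := σ - 1) (R := 0) (L := L) (a := r)
      (by omega) (by omega) (by omega) (by omega) (.inr (by omega)) (by omega) ?_ (by omega)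
    rw [zero_mul]
    omega

theorem stmt6_general (t k m n p σ : ℕ)
    (hm : 4 * (t + k) + 2 ≤ m)
    (hp : p = (n - 1) / t)
    (hσ1 : 2 ≤ σ) (hσ2 : σ ≤ k) (hpσ : p = m - σ) :
    (∀ N : ℕ, RamseyProp m k n N → n + k * p + σ - 1 ≤ N) ∧
    ∃ G : SimpleGraph (Fin (n + k * p + σ - 2)),
      ¬ HasCycleLen G m ∧ ¬ HasBook Gᶜ k n := by
  obtain ⟨G, hcyc, hbook⟩ := exists_ramsey_witness (by omega) hp hσ1 hσ2 hpσ
  refine ⟨fun N hN => ?_, G, hcyc, hbook⟩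
  by_contra! hlt
  let φ := Embedding.comap (Fin.castLEEmb (by omega : N ≤ n + k * p + σ - 2)) G
  rcases hN (G.comap (Fin.castLEEmb _)) with h | h
  exacts [hcyc (h.map φ), hbook (h.compl_map φ)]

theorem stmt6 (t k m n p σ : ℕ) (ht : 2 ≤ t) (hk : 2 ≤ k) (hmEven : Even m)
    (hm : 4 * (t + k) + 2 ≤ m)
    (hn1 : (t - 1) * (m - 1) ≤ n - 1) (hn2 : n - 1 < t * (m - 1))
    (hp : p = (n - 1) / t)
    (hσ1 : 2 ≤ σ) (hσ2 : σ ≤ k) (hpσ : p = m - σ) :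
    (∀ N : ℕ, RamseyProp m k n N → n + k * p + σ - 1 ≤ N) ∧
    ∃ G : SimpleGraph (Fin (n + k * p + σ - 2)),
      ¬ HasCycleLen G m ∧ ¬ HasBook Gᶜ k n :=
  stmt6_general t k m n p σ hm hp hσ1 hσ2 hpσ
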